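/- Let d ≥ 1, let g ≥ 0 be an integer, and let μ, ν be compositions of d of lengths m and n with m + n ≥ 3 and b = 2g−2+m+n ≥ 0. Then d! divides |F(g,μ,ν)| and d! divides |F^bi(g,μ,ν)|. (The quotients are the double Hurwitz number h_g(μ,ν) and the bi-pruned double Hurwitz number Ph_g(μ,ν), which are integers because the covers, respectively Hurwitz galaxies, being counted have no nontrivial automorphisms when m + n ≠ 2; the group S_d acts freely on F(g,μ,ν) and on F^bi(g,μ,ν) by simultaneous conjugation and relabeling.) -/

import Mathlib

open Equiv

/-- `L` is a `μ`-labeling of the permutation `σ` of `{1,…,d}`. -/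
def IsLabeling (d m : ℕ) (μ : Fin m → ℕ) (σ : Equiv.Perm (Fin d)) (L : Fin d → Fin m) : Prop :=
  (∀ x, L (σ x) = L x) ∧
  (∀ i, (Finset.univ.filter fun x => L x = i).card = μ i) ∧
  (∀ (i : Fin m) (x y : Fin d), L x = i → L y = i → ∃ k : ℤ, (σ ^ k) x = y)

/-- The subgroup generated by `S` acts transitively on `{1,…,d}`. -/
def IsTransitiveOn (d : ℕ) (S : Set (Equiv.Perm (Fin d))) : Prop :=
  ∀ x y : Fin d, ∃ g ∈ Subgroup.closure S, g x = y

/-- A tuple `(σ₁, L₁, (τ₁,…,τ_b), σ₂, L₂)`. -/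
abbrev FactTuple (d m n b : ℕ) :=
  Equiv.Perm (Fin d) × (Fin d → Fin m) × (Fin b → Equiv.Perm (Fin d)) ×
    Equiv.Perm (Fin d) × (Fin d → Fin n)

/-- A factorisation of type `(g,μ,ν)`. -/
def IsFactorisation (d m n b : ℕ) (μ : Fin m → ℕ) (ν : Fin n → ℕ)
    (F : FactTuple d m n b) : Prop :=
  IsLabeling d m μ F.1 F.2.1 ∧
  IsLabeling d n ν F.2.2.2.1 F.2.2.2.2 ∧
  (∀ i, (F.2.2.1 i).IsSwap) ∧
  IsTransitiveOn d ({F.1, F.2.2.2.1} ∪ Set.range F.2.2.1) ∧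
  ((List.ofFn F.2.2.1).reverse).prod * F.1 = F.2.2.2.1

/-- `η_i = τ_i ⋯ τ₁ · σ₁` (with `η₀ = σ₁`), where `τ` is indexed from `0`. -/
def eta (d b : ℕ) (σ₁ : Equiv.Perm (Fin d)) (τ : Fin b → Equiv.Perm (Fin d)) (i : ℕ) :
    Equiv.Perm (Fin d) :=
  (((List.ofFn τ).take i).reverse).prod * σ₁

/-- `π_i = η_{i-1}⁻¹ · η_i` (0-indexed: `π i = (η i)⁻¹ · η (i+1)`). -/
def invertTau (d b : ℕ) (σ₁ : Equiv.Perm (Fin d)) (τ : Fin b → Equiv.Perm (Fin d)) :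
    Fin b → Equiv.Perm (Fin d) :=
  fun i => (eta d b σ₁ τ i)⁻¹ * eta d b σ₁ τ (i + 1)

/-- A bi-pruned factorisation: a factorisation such that every fiber of `L₁` is moved
by at least two of the `τ_j`, and every fiber of `L₂` is moved by at least two of the
`π_j = η_{j-1}⁻¹ · η_j`. -/
def IsBiPrunedFactorisation (d m n b : ℕ) (μ : Fin m → ℕ) (ν : Fin n → ℕ)
    (F : FactTuple d m n b) : Prop :=
  IsFactorisation d m n b μ ν F ∧
  (∀ i : Fin m, ∃ j k : Fin b, j ≠ k ∧
    (∃ x : Fin d, F.2.1 x = i ∧ F.2.2.1 j x ≠ x) ∧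
    (∃ x : Fin d, F.2.1 x = i ∧ F.2.2.1 k x ≠ x)) ∧
  (∀ i : Fin n, ∃ j k : Fin b, j ≠ k ∧
    (∃ x : Fin d, F.2.2.2.2 x = i ∧ invertTau d b F.1 F.2.2.1 j x ≠ x) ∧
    (∃ x : Fin d, F.2.2.2.2 x = i ∧ invertTau d b F.1 F.2.2.1 k x ≠ x))

/-!
Let `S_d` act on tuples by simultaneous conjugation and relabeling; both conditions are
invariant, so it suffices that the action is free. If `z` fixes a factorisation, it commutes
with the monodromy group, which is transitive, so `z = 1` or `z` has no fixed point. In the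
latter case every transposition `τ = (a c)` commuting with `z` satisfies `z a = c`, so `τ`
preserves every labeling that `z` preserves, in particular `L₁` and `L₂`. Since
`σ₂ = τ_b ⋯ τ₁ σ₁`, the whole monodromy group then preserves both labelings, so by
transitivity they are constant; as every label occurs, `m ≤ 1` and `n ≤ 1`, contradicting
`m + n ≥ 3`.
-/

theorem MulAction.card_dvd_card_of_isCancelSMul (G X : Type*) [Group G] [MulAction G X]
    [IsCancelSMul G X] : Nat.card G ∣ Nat.card X := by
  rw [Nat.card_congr (selfEquivOrbitsQuotientProd (G := G) (X := X)
    (isCancelSMul_iff_stabilizer_eq_bot.mp ‹_›)), Nat.card_prod]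
  exact dvd_mul_left _ _

namespace Equiv.Perm

variable {α β : Type*}

theorem commute_of_conj_eq {z g : Perm α} (h : MulAut.conj z g = g) : Commute z g := by
  rwa [MulAut.conj_apply, mul_inv_eq_iff_eq_mul] at h

theorem IsSwap.conj [DecidableEq α] {τ : Perm α} (hτ : τ.IsSwap) (z : Perm α) :
    (MulAut.conj z τ).IsSwap := by
  obtain ⟨a, c, hac, rfl⟩ := hτ
  exact ⟨z a, z c, z.injective.ne hac, by rw [MulAut.conj_apply, swap_apply_apply]⟩

theorem apply_eq_of_commute_swap [DecidableEq α] {z : Perm α} {a c : α} (hac : a ≠ c)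
    (hz : Commute z (swap a c)) (ha : z a ≠ a) : z a = c := by
  by_contra hc
  have hzc : z c = z a := by
    simpa [swap_apply_of_ne_of_ne ha hc] using congrArg (· a) hz.eq
  exact hac (z.injective hzc).symm

theorem comp_eq_of_commute_isSwap [DecidableEq α] {z τ : Perm α} {L : α → β} (hL : L ∘ z = L)
    (hz : ∀ x, z x ≠ x) (hτ : τ.IsSwap) (hcomm : Commute z τ) : L ∘ τ = L := by
  obtain ⟨a, c, hac, rfl⟩ := hτ
  have hLac : L a = L c := by
    rw [← apply_eq_of_commute_swap hac hcomm (hz a)]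
    exact (congrFun hL a).symm
  funext x
  simp only [Function.comp_apply, swap_apply_def]
  split_ifs with hxa hxc
  · rw [hxa, hLac]
  · rw [hxc, hLac]
  · rfl

end Equiv.Perm

open Equiv Equiv.Perm

def labelStabilizer {α β : Type*} (L : α → β) : Subgroup (Perm α) where
  carrier := {g | L ∘ g = L}
  one_mem' := rfl
  mul_mem' {g h} hg hh := by
    change L ∘ g ∘ h = L
    rw [← Function.comp_assoc, hg, hh]
  inv_mem' {g} hg := by
    change L ∘ ⇑g⁻¹ = L
    conv_lhs => rw [← hg]
    funext x
    simp

section Monodromy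

variable {d : ℕ}

theorem IsTransitiveOn.eq_one_of_commute {S : Set (Perm (Fin d))} (ht : IsTransitiveOn d S)
    {z : Perm (Fin d)} (hz : ∀ s ∈ S, Commute z s) {a : Fin d} (ha : z a = a) : z = 1 := by
  have hcent : Subgroup.closure S ≤ Subgroup.centralizer {z} :=
    (Subgroup.closure_le _).2 fun s hs => Subgroup.mem_centralizer_singleton_iff.2 (hz s hs).eq.symm
  refine Equiv.ext fun x => ?_
  obtain ⟨g, hg, rfl⟩ := ht a x
  have hgz : g * z = z * g := Subgroup.mem_centralizer_singleton_iff.1 (hcent hg)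
  simpa [ha] using (congrArg (· a) hgz).symm

theorem IsTransitiveOn.apply_eq_of_closure_le {β : Type*} {S : Set (Perm (Fin d))}
    (ht : IsTransitiveOn d S) {L : Fin d → β} (hS : Subgroup.closure S ≤ labelStabilizer L)
    (x y : Fin d) : L x = L y := by
  obtain ⟨g, hg, rfl⟩ := ht x y
  exact (congrFun (hS hg) x).symm

theorem IsTransitiveOn.image_conj {S : Set (Perm (Fin d))} (ht : IsTransitiveOn d S)
    (z : Perm (Fin d)) : IsTransitiveOn d (MulAut.conj z '' S) := by
  intro x y
  obtain ⟨g, hg, hgxy⟩ := ht (z⁻¹ x) (z⁻¹ y)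
  refine ⟨MulAut.conj z g, ?_, by
    simp only [MulAut.conj_apply, mul_apply, hgxy]; exact z.apply_symm_apply y⟩
  have hmem := Subgroup.mem_map_of_mem (MulAut.conj z).toMonoidHom hg
  rwa [MonoidHom.map_closure] at hmem

variable {m : ℕ} {μ : Fin m → ℕ} {σ : Perm (Fin d)} {L : Fin d → Fin m}

theorem IsLabeling.surjective (hL : IsLabeling d m μ σ L) (hμ : ∀ i, 0 < μ i) :
    Function.Surjective L := by
  intro i
  obtain ⟨x, hx⟩ := Finset.card_pos.1 ((hL.2.1 i).symm ▸ hμ i)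
  exact ⟨x, (Finset.mem_filter.1 hx).2⟩

theorem IsLabeling.le_one_of_closure_le (hL : IsLabeling d m μ σ L) (hμ : ∀ i, 0 < μ i)
    {S : Set (Perm (Fin d))} (ht : IsTransitiveOn d S)
    (hS : Subgroup.closure S ≤ labelStabilizer L) : m ≤ 1 := by
  refine Fin.subsingleton_iff_le_one.1 ⟨fun i j => ?_⟩
  obtain ⟨x, rfl⟩ := hL.surjective hμ i
  obtain ⟨y, rfl⟩ := hL.surjective hμ j
  exact ht.apply_eq_of_closure_le hS x y

theorem IsLabeling.conj (hL : IsLabeling d m μ σ L) (z : Perm (Fin d)) :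
    IsLabeling d m μ (MulAut.conj z σ) (L ∘ ⇑z⁻¹) := by
  obtain ⟨hσ, hcard, hcyc⟩ := hL
  refine ⟨fun x => by simp [hσ], fun i => ?_, fun i x y hx hy => ?_⟩
  · rw [← hcard i]
    exact Finset.card_equiv z⁻¹ (by simp)
  · obtain ⟨k, hk⟩ := hcyc i (z⁻¹ x) (z⁻¹ y) hx hy
    refine ⟨k, ?_⟩
    rw [← map_zpow, MulAut.conj_apply]
    simp only [mul_apply, hk]
    exact z.apply_symm_apply y

end Monodromy

section Factorisation

variable {d m n b : ℕ}

def conjFact (z : Perm (Fin d)) (F : FactTuple d m n b) : FactTuple d m n b :=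
  (MulAut.conj z F.1, F.2.1 ∘ ⇑z⁻¹, MulAut.conj z ∘ F.2.2.1, MulAut.conj z F.2.2.2.1,
    F.2.2.2.2 ∘ ⇑z⁻¹)

theorem conjFact_one (F : FactTuple d m n b) : conjFact 1 F = F := rfl

theorem conjFact_mul (x y : Perm (Fin d)) (F : FactTuple d m n b) :
    conjFact (x * y) F = conjFact x (conjFact y F) := by
  simp only [conjFact, map_mul, mul_inv_rev, coe_mul, MulAut.mul_apply]
  rfl

abbrev conjFactAction (P : FactTuple d m n b → Prop) (hP : ∀ z F, P F → P (conjFact z F)) :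
    MulAction (Perm (Fin d)) {F // P F} where
  smul z F := ⟨conjFact z F, hP z F F.2⟩
  one_smul F := Subtype.ext (conjFact_one F.1)
  mul_smul x y F := Subtype.ext (conjFact_mul x y F.1)

theorem eta_conj (z σ₁ : Perm (Fin d)) (τ : Fin b → Perm (Fin d)) (i : ℕ) :
    eta d b (MulAut.conj z σ₁) (MulAut.conj z ∘ τ) i = MulAut.conj z (eta d b σ₁ τ i) := by
  rw [eta, eta, ← List.map_ofFn, ← List.map_take, ← List.map_reverse, ← map_list_prod,
    ← map_mul]

theorem invertTau_conj (z σ₁ : Perm (Fin d)) (τ : Fin b → Perm (Fin d)) (i : Fin b) :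
    invertTau d b (MulAut.conj z σ₁) (MulAut.conj z ∘ τ) i =
      MulAut.conj z (invertTau d b σ₁ τ i) := by
  simp only [invertTau, eta_conj, map_mul, map_inv]

theorem exists_conj_apply_ne {γ : Type*} (L : Fin d → γ) (p z : Perm (Fin d)) (i : γ)
    (h : ∃ x, L x = i ∧ p x ≠ x) : ∃ x, (L ∘ ⇑z⁻¹) x = i ∧ MulAut.conj z p x ≠ x := by
  obtain ⟨x, hx, hpx⟩ := h
  exact ⟨z x, by simpa using hx, by simpa using hpx⟩

variable {μ : Fin m → ℕ} {ν : Fin n → ℕ}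

theorem IsFactorisation.conj {F : FactTuple d m n b} (hF : IsFactorisation d m n b μ ν F)
    (z : Perm (Fin d)) : IsFactorisation d m n b μ ν (conjFact z F) := by
  obtain ⟨hL₁, hL₂, hswap, ht, hprod⟩ := hF
  refine ⟨hL₁.conj z, hL₂.conj z, fun i => (hswap i).conj z, ?_, ?_⟩
  · convert ht.image_conj z using 1
    rw [Set.image_union, Set.image_pair, ← Set.range_comp]
    rfl
  · simp only [conjFact, ← hprod, ← List.map_ofFn, ← List.map_reverse, map_list_prod, map_mul]

theorem IsBiPrunedFactorisation.conj {F : FactTuple d m n b}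
    (hF : IsBiPrunedFactorisation d m n b μ ν F) (z : Perm (Fin d)) :
    IsBiPrunedFactorisation d m n b μ ν (conjFact z F) := by
  obtain ⟨hfac, h₁, h₂⟩ := hF
  refine ⟨hfac.conj z, fun i => ?_, fun i => ?_⟩
  · obtain ⟨j, k, hjk, hj, hk⟩ := h₁ i
    exact ⟨j, k, hjk, exists_conj_apply_ne _ _ z i hj, exists_conj_apply_ne _ _ z i hk⟩
  · obtain ⟨j, k, hjk, hj, hk⟩ := h₂ i
    have hπ (l : Fin b) : invertTau d b (MulAut.conj z F.1) (MulAut.conj z ∘ F.2.2.1) l =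
        MulAut.conj z (invertTau d b F.1 F.2.2.1 l) := invertTau_conj z F.1 F.2.2.1 l
    exact ⟨j, k, hjk, hπ j ▸ exists_conj_apply_ne _ _ z i hj,
      hπ k ▸ exists_conj_apply_ne _ _ z i hk⟩

end Factorisation

section Freeness

variable {d m n b : ℕ} {μ : Fin m → ℕ} {ν : Fin n → ℕ}

theorem IsLabeling.mem_labelStabilizer {σ : Perm (Fin d)} {L : Fin d → Fin m}
    (hL : IsLabeling d m μ σ L) : σ ∈ labelStabilizer L :=
  funext hL.1

theorem IsFactorisation.closure_le_labelStabilizer {β : Type*} {F : FactTuple d m n b}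
    (hF : IsFactorisation d m n b μ ν F) {L : Fin d → β}
    (hτ : ∀ i, F.2.2.1 i ∈ labelStabilizer L)
    (hσ : F.1 ∈ labelStabilizer L ∨ F.2.2.2.1 ∈ labelStabilizer L) :
    Subgroup.closure ({F.1, F.2.2.2.1} ∪ Set.range F.2.2.1) ≤ labelStabilizer L := by
  have hprod : (List.ofFn F.2.2.1).reverse.prod ∈ labelStabilizer L :=
    Subgroup.list_prod_mem _ fun g hg => by
      obtain ⟨i, rfl⟩ := List.mem_ofFn.1 (List.mem_reverse.1 hg)
      exact hτ i
  have hiff : F.1 ∈ labelStabilizer L ↔ F.2.2.2.1 ∈ labelStabilizer L := by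
    rw [← hF.2.2.2.2, Subgroup.mul_mem_cancel_left _ hprod]
  refine (Subgroup.closure_le _).2 ?_
  rintro g ((rfl | rfl) | ⟨i, rfl⟩)
  · exact hσ.elim id hiff.2
  · exact hσ.elim hiff.1 id
  · exact hτ i

theorem IsFactorisation.eq_one_of_conjFact_eq {F : FactTuple d m n b}
    (hF : IsFactorisation d m n b μ ν F) (hmn : 3 ≤ m + n) (hμ : ∀ i, 0 < μ i)
    (hν : ∀ j, 0 < ν j) {z : Perm (Fin d)} (hz : conjFact z F = F) : z = 1 := by
  obtain ⟨σ₁, L₁, τ, σ₂, L₂⟩ := F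
  have ⟨hlab₁, hlab₂, hswap, ht, _⟩ := hF
  simp only [conjFact, Prod.mk.injEq] at hz
  obtain ⟨hσ₁, hL₁, hτ, hσ₂, hL₂⟩ := hz
  have hcomm : ∀ s ∈ ({σ₁, σ₂} ∪ Set.range τ : Set (Perm (Fin d))), Commute z s := by
    rintro s ((rfl | rfl) | ⟨i, rfl⟩)
    exacts [commute_of_conj_eq hσ₁, commute_of_conj_eq hσ₂, commute_of_conj_eq (congrFun hτ i)]
  by_contra hz1
  have hfree : ∀ x, z x ≠ x := fun x hx => hz1 (ht.eq_one_of_commute hcomm hx)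
  have hτL {k : ℕ} {L : Fin d → Fin k} (hL : L ∘ ⇑z⁻¹ = L) (i : Fin b) :
      τ i ∈ labelStabilizer L :=
    comp_eq_of_commute_isSwap ((labelStabilizer L).inv_mem_iff.1 hL) hfree (hswap i)
      (hcomm _ (Or.inr ⟨i, rfl⟩))
  have hm := hlab₁.le_one_of_closure_le hμ ht
    (hF.closure_le_labelStabilizer (hτL hL₁) (Or.inl hlab₁.mem_labelStabilizer))
  have hn := hlab₂.le_one_of_closure_le hν ht
    (hF.closure_le_labelStabilizer (hτL hL₂) (Or.inr hlab₂.mem_labelStabilizer))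
  omega

theorem factorial_dvd_card_of_conjFact_invariant (P : FactTuple d m n b → Prop)
    (hP : ∀ z F, P F → P (conjFact z F)) (hPF : ∀ F, P F → IsFactorisation d m n b μ ν F)
    (hmn : 3 ≤ m + n) (hμ : ∀ i, 0 < μ i) (hν : ∀ j, 0 < ν j) :
    d.factorial ∣ Nat.card {F // P F} := by
  let := conjFactAction P hP
  have : IsCancelSMul (Perm (Fin d)) {F // P F} :=
    isCancelSMul_iff_eq_one_of_smul_eq.2 fun z F hzF =>
      (hPF F F.2).eq_one_of_conjFact_eq hmn hμ hν (congrArg Subtype.val hzF)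
  have hdvd := MulAction.card_dvd_card_of_isCancelSMul (Perm (Fin d)) {F // P F}
  rwa [Nat.card_perm, Nat.card_fin] at hdvd

end Freeness

theorem stmt9_general (d m n b : ℕ) (hmn : 3 ≤ m + n)
    (μ : Fin m → ℕ) (ν : Fin n → ℕ)
    (hμpos : ∀ i, 0 < μ i) (hνpos : ∀ j, 0 < ν j) :
    Nat.factorial d ∣
        Nat.card {F : FactTuple d m n b // IsFactorisation d m n b μ ν F} ∧
    Nat.factorial d ∣
        Nat.card {F : FactTuple d m n b // IsBiPrunedFactorisation d m n b μ ν F} :=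
  ⟨factorial_dvd_card_of_conjFact_invariant _ (fun z _ hF => hF.conj z) (fun _ => id)
      hmn hμpos hνpos,
    factorial_dvd_card_of_conjFact_invariant _ (fun z _ hF => hF.conj z) (fun _ hF => hF.1)
      hmn hμpos hνpos⟩

/-- for `d ≥ 1`, `m + n ≥ 3` and `b = 2g − 2 + m + n ≥ 0`, the number
of factorisations of type `(g,μ,ν)` and the number of bi-pruned factorisations of
type `(g,μ,ν)` are both divisible by `d!` (the quotients being `h_g(μ,ν)` and
`Ph_g(μ,ν)`). -/
theorem stmt9 (d g m n b : ℕ) (hd : 1 ≤ d) (hmn : 3 ≤ m + n)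
    (μ : Fin m → ℕ) (ν : Fin n → ℕ)
    (hμpos : ∀ i, 0 < μ i) (hνpos : ∀ j, 0 < ν j)
    (hμd : ∑ i, μ i = d) (hνd : ∑ j, ν j = d)
    (hb : b + 2 = 2 * g + m + n) :
    Nat.factorial d ∣
        Nat.card {F : FactTuple d m n b // IsFactorisation d m n b μ ν F} ∧
    Nat.factorial d ∣
        Nat.card {F : FactTuple d m n b // IsBiPrunedFactorisation d m n b μ ν F} :=
  stmt9_general d m n b hmn μ ν hμpos hνpos
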